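/- Let L be a real Lie algebra, J linear with J² = -id, and D^∞ = ⋃ₖ D⁽ᵏ⁾ the union of the J-derived flag (D⁽¹⁾ = span Im N^J, D⁽ᵏ⁺¹⁾ = D⁽ᵏ⁾ + span{(L_U J)(X) : U ∈ D⁽ᵏ⁾, X ∈ L} + [D⁽ᵏ⁾,D⁽ᵏ⁾]). Then D^∞ is a Lie subalgebra of L, is J-stable, and satisfies (L_U J)(X) ∈ D^∞ for all U ∈ D^∞ and X ∈ L. -/

import Mathlib

/-!
Write `E k = D⁽ᵏ⁺¹⁾`, so that `E (k + 1)` is obtained from `E k` by one step of the flag. The step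
contains its input, so the flag increases and every element, or pair of elements, of the union lies
in a single `E k`; the next step then contains their brackets and Lie derivatives.
For `J`-stability, `J² = -1` gives `J (N X Y) = -N (J X) Y`, `J ((L_U J) X) = -(L_U J) (J X)` and
`J ⁅a, b⁆ = ⁅a, J b⁆ - (L_a J) b`, from which `J (E k) ≤ E (k + 1)` follows by induction.
-/

section DerivedFlag

variable {R L : Type*} [CommRing R] [LieRing L] [LieAlgebra R L] (J : L →ₗ[R] L)

def nijenhuis (X Y : L) : L :=
  ⁅J X, J Y⁆ - J ⁅J X, Y⁆ - J ⁅X, J Y⁆ - ⁅X, Y⁆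

/-- `(L_U J) X`. -/
def lieDerivEnd (U X : L) : L :=
  ⁅U, J X⁆ - J ⁅U, X⁆

def flagStep (V : Submodule R L) : Submodule R L :=
  V ⊔ Submodule.span R {z | ∃ U ∈ V, ∃ X, z = lieDerivEnd J U X} ⊔
    Submodule.span R {z | ∃ x ∈ V, ∃ y ∈ V, z = ⁅x, y⁆}

variable {J}

lemma le_flagStep (V : Submodule R L) : V ≤ flagStep J V :=
  le_sup_of_le_left le_sup_left

lemma lieDerivEnd_mem_flagStep {V : Submodule R L} {U : L} (hU : U ∈ V) (X : L) :
    lieDerivEnd J U X ∈ flagStep J V :=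
  Submodule.mem_sup_left (Submodule.mem_sup_right (Submodule.subset_span ⟨U, hU, X, rfl⟩))

lemma lie_mem_flagStep {V : Submodule R L} {x y : L} (hx : x ∈ V) (hy : y ∈ V) :
    ⁅x, y⁆ ∈ flagStep J V :=
  Submodule.mem_sup_right (Submodule.subset_span ⟨x, hx, y, hy, rfl⟩)

section Square

variable (hJ : ∀ X, J (J X) = -X)
include hJ

lemma map_nijenhuis (X Y : L) : J (nijenhuis J X Y) = -nijenhuis J (J X) Y := by
  simp only [nijenhuis, map_sub, hJ, neg_lie, map_neg]
  abel

lemma map_lieDerivEnd (U X : L) : J (lieDerivEnd J U X) = -lieDerivEnd J U (J X) := by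
  simp only [lieDerivEnd, map_sub, hJ, lie_neg]
  abel

lemma map_span_nijenhuis_le :
    (Submodule.span R {z | ∃ X Y, z = nijenhuis J X Y}).map J ≤
      Submodule.span R {z | ∃ X Y, z = nijenhuis J X Y} := by
  rw [Submodule.map_span, Submodule.span_le]
  rintro _ ⟨_, ⟨X, Y, rfl⟩, rfl⟩
  rw [SetLike.mem_coe, map_nijenhuis hJ]
  exact neg_mem (Submodule.subset_span ⟨J X, Y, rfl⟩)

lemma map_flagStep_le {V W : Submodule R L} (hVW : V ≤ W) (hJV : V.map J ≤ W) :
    (flagStep J V).map J ≤ flagStep J W := by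
  simp only [flagStep, Submodule.map_sup, Submodule.map_span, sup_le_iff, Submodule.span_le]
  refine ⟨⟨hJV.trans (le_flagStep W), ?_⟩, ?_⟩
  · rintro _ ⟨_, ⟨U, hU, X, rfl⟩, rfl⟩
    rw [SetLike.mem_coe, map_lieDerivEnd hJ]
    exact neg_mem (lieDerivEnd_mem_flagStep (hVW hU) _)
  · rintro _ ⟨_, ⟨a, ha, b, hb, rfl⟩, rfl⟩
    have hsplit : J ⁅a, b⁆ = ⁅a, J b⁆ - lieDerivEnd J a b := by
      rw [lieDerivEnd]; abel
    rw [SetLike.mem_coe, hsplit]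
    exact sub_mem (lie_mem_flagStep (hVW ha) (hJV ⟨b, hb, rfl⟩))
      (lieDerivEnd_mem_flagStep (hVW ha) b)

end Square

section Iterate

variable {E : ℕ → Submodule R L} (hE : ∀ k, E (k + 1) = flagStep J (E k))
include hE

lemma monotone_of_eq_flagStep : Monotone E :=
  monotone_nat_of_le_succ fun k => (hE k).ge.trans' (le_flagStep (E k))

lemma exists_mem_of_mem_iSup {x : L} (hx : x ∈ ⨆ k, E k) : ∃ k, x ∈ E k :=
  (Submodule.mem_iSup_of_directed E (monotone_of_eq_flagStep hE).directed_le).mp hx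

lemma exists_mem_pair_of_mem_iSup {x y : L} (hx : x ∈ ⨆ k, E k) (hy : y ∈ ⨆ k, E k) :
    ∃ k, x ∈ E k ∧ y ∈ E k := by
  obtain ⟨i, hi⟩ := exists_mem_of_mem_iSup hE hx
  obtain ⟨j, hj⟩ := exists_mem_of_mem_iSup hE hy
  have hmono := monotone_of_eq_flagStep hE
  exact ⟨max i j, hmono (le_max_left i j) hi, hmono (le_max_right i j) hj⟩

lemma lie_mem_iSup {x y : L} (hx : x ∈ ⨆ k, E k) (hy : y ∈ ⨆ k, E k) :
    ⁅x, y⁆ ∈ ⨆ k, E k := by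
  obtain ⟨k, hxk, hyk⟩ := exists_mem_pair_of_mem_iSup hE hx hy
  exact le_iSup E (k + 1) (hE k ▸ lie_mem_flagStep hxk hyk)

lemma lieDerivEnd_mem_iSup {U : L} (hU : U ∈ ⨆ k, E k) (X : L) :
    lieDerivEnd J U X ∈ ⨆ k, E k := by
  obtain ⟨k, hUk⟩ := exists_mem_of_mem_iSup hE hU
  exact le_iSup E (k + 1) (hE k ▸ lieDerivEnd_mem_flagStep hUk X)

lemma map_le_succ_of_eq_flagStep (hJ : ∀ X, J (J X) = -X) (h0 : (E 0).map J ≤ E 0) (k : ℕ) :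
    (E k).map J ≤ E (k + 1) := by
  induction k with
  | zero => exact h0.trans (monotone_of_eq_flagStep hE (Nat.le_succ 0))
  | succ k ih =>
    have h := map_flagStep_le hJ (monotone_of_eq_flagStep hE (Nat.le_succ k)) ih
    rwa [← hE k, ← hE (k + 1)] at h

lemma map_mem_iSup (hJ : ∀ X, J (J X) = -X) (h0 : (E 0).map J ≤ E 0) {x : L}
    (hx : x ∈ ⨆ k, E k) : J x ∈ ⨆ k, E k := by
  obtain ⟨k, hxk⟩ := exists_mem_of_mem_iSup hE hx
  exact le_iSup E (k + 1) (map_le_succ_of_eq_flagStep hE hJ h0 k ⟨x, hxk, rfl⟩)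

end Iterate

end DerivedFlag

/-- The union `D^∞ = ⋃ₖ D⁽ᵏ⁾` of the `J`-derived flag is a Lie subalgebra, is `J`-stable,
and satisfies `(L_U J)(X) ∈ D^∞` for all `U ∈ D^∞`, `X ∈ L`. -/
theorem derived_flag_union_properties (L : Type*) [LieRing L] [LieAlgebra ℝ L]
    (J : L →ₗ[ℝ] L) (hJ : ∀ X, J (J X) = -X)
    (N : L → L → L)
    (hN : ∀ X Y, N X Y = ⁅J X, J Y⁆ - J ⁅J X, Y⁆ - J ⁅X, J Y⁆ - ⁅X, Y⁆)
    (D : ℕ → Submodule ℝ L)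
    (hD1 : D 1 = Submodule.span ℝ {z : L | ∃ X Y : L, z = N X Y})
    (hDsucc : ∀ k, 1 ≤ k → D (k + 1) =
      D k ⊔ Submodule.span ℝ {z : L | ∃ U ∈ D k, ∃ X : L, z = ⁅U, J X⁆ - J ⁅U, X⁆} ⊔
        Submodule.span ℝ {z : L | ∃ x ∈ D k, ∃ y ∈ D k, z = ⁅x, y⁆}) :
    (∀ a ∈ (⨆ k, D (k + 1)), ∀ b ∈ (⨆ k, D (k + 1)), ⁅a, b⁆ ∈ (⨆ k, D (k + 1))) ∧
    (∀ x ∈ (⨆ k, D (k + 1)), J x ∈ (⨆ k, D (k + 1))) ∧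
    (∀ U ∈ (⨆ k, D (k + 1)), ∀ X : L, ⁅U, J X⁆ - J ⁅U, X⁆ ∈ (⨆ k, D (k + 1))) := by
  obtain rfl : N = nijenhuis J := funext₂ hN
  have hE : ∀ k, D (k + 1 + 1) = flagStep J (D (k + 1)) := fun k => hDsucc (k + 1) k.succ_pos
  have h0 : (D 1).map J ≤ D 1 := hD1 ▸ map_span_nijenhuis_le hJ
  exact ⟨fun a ha b hb => lie_mem_iSup hE ha hb, fun x hx => map_mem_iSup hE hJ h0 hx,
    fun U hU X => lieDerivEnd_mem_iSup hE hU X⟩
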